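/- arXiv:1408.3962 — 2 statements merged into one kernel-verified Lean document; each statement's English description precedes it below -/
import Mathlib

section
/- The number of strongly connected partial orientations of a connected multigraph G equals 2^{n−1} · T_G(1/2, 3), where n = |V(G)|. -/
open Classical

noncomputable section

/-- A finite multigraph, given by a finite vertex type, a finite edge type, and
two endpoint maps (which also provide a built-in reference direction for each edge). -/
structure Multigraph where
  V : Type
  E : Type
  [fintypeV : Fintype V]
  [fintypeE : Fintype E]
  fst : E → V
  snd : E → V

attribute [instance] Multigraph.fintypeV Multigraph.fintypeE

namespace Multigraph

variable (G : Multigraph)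

/-- Adjacency between vertices using only edges in `S`. -/
def adjOn (S : Set G.E) (u v : G.V) : Prop :=
  ∃ e ∈ S, (G.fst e = u ∧ G.snd e = v) ∨ (G.fst e = v ∧ G.snd e = u)

/-- Reachability (in the undirected sense) using only edges in `S`. -/
def reachOn (S : Set G.E) : G.V → G.V → Prop :=
  Relation.ReflTransGen (G.adjOn S)

def Connected : Prop := ∀ u v : G.V, G.reachOn Set.univ u v

def IsLoop (e : G.E) : Prop := G.fst e = G.snd e

def IsBridge (e : G.E) : Prop := ¬ G.reachOn {f | f ≠ e} (G.fst e) (G.snd e)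

/-- Number of connected components of the spanning subgraph with edge set `S`. -/
def comps (S : Set G.E) : ℕ := Nat.card (Quot (G.reachOn S))

/-- Rank of an edge set: `|V|` minus the number of components it spans. -/
def rk (S : Set G.E) : ℕ := Fintype.card G.V - G.comps S

/-- The Tutte polynomial, via the corank-nullity (subgraph) expansion. -/
def tutte (x y : ℚ) : ℚ :=
  ∑ S : Finset G.E,
    (x - 1) ^ (G.rk Set.univ - G.rk (↑S : Set G.E)) * (y - 1) ^ (S.card - G.rk (↑S : Set G.E))

/-- The genus (cycle rank) `|E| - |V| + 1` of a connected multigraph. -/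
def genus : ℕ := Fintype.card G.E + 1 - Fintype.card G.V

/-- A partial orientation: each edge is unoriented (`none`), oriented in the reference
direction `fst → snd` (`some true`), or oriented oppositely (`some false`). -/
abbrev PartialOrientation := G.E → Option Bool

/-- The tail of edge `e` traversed in direction `b` (`true` = `fst → snd`). -/
def dtail (e : G.E) (b : Bool) : G.V := if b then G.fst e else G.snd e

/-- The head of edge `e` traversed in direction `b` (`true` = `fst → snd`). -/
def dhead (e : G.E) (b : Bool) : G.V := if b then G.snd e else G.fst e

/-- Directed adjacency under a partial orientation. -/
def dAdj (O : G.PartialOrientation) (u v : G.V) : Prop :=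
  ∃ e b, O e = some b ∧ G.dtail e b = u ∧ G.dhead e b = v

/-- Directed reachability under a partial orientation. -/
def dReach (O : G.PartialOrientation) : G.V → G.V → Prop :=
  Relation.ReflTransGen (G.dAdj O)

/-- A partial orientation is acyclic iff it contains no directed cycle, equivalently there
is no oriented edge together with a directed path from its head back to its tail. -/
def Acyclic (O : G.PartialOrientation) : Prop :=
  ¬ ∃ e b, O e = some b ∧ G.dReach O (G.dhead e b) (G.dtail e b)

/-- `e` crosses the cut determined by the vertex set `X`. -/
def crosses (X : Set G.V) (e : G.E) : Prop := ¬ ((G.fst e ∈ X) ↔ (G.snd e ∈ X))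

/-- `(X, Xᶜ)` is a directed cut of `O`: the cut is nonempty and every crossing edge is
oriented from `X` to `Xᶜ`. -/
def IsDirCut (O : G.PartialOrientation) (X : Set G.V) : Prop :=
  (∃ e, G.crosses X e) ∧
  ∀ e, G.crosses X e →
    (G.fst e ∈ X → O e = some true) ∧ (G.snd e ∈ X → O e = some false)

/-- A partial orientation is strongly connected iff it contains no directed cut. -/
def StronglyConnected (O : G.PartialOrientation) : Prop :=
  ¬ ∃ X, G.IsDirCut O X

/-- A directed cycle of `O`: a nonempty cyclically chained list of oriented steps using
pairwise distinct edges, each oriented in `O` as traversed. -/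
def IsDCycle (O : G.PartialOrientation) (c : List (G.E × Bool)) : Prop :=
  c ≠ [] ∧ (∀ s ∈ c, O s.1 = some s.2) ∧
  List.Chain' (fun s t => G.dhead s.1 s.2 = G.dtail t.1 t.2) (c ++ c.take 1) ∧
  (c.map Prod.fst).Nodup

/-- A half-open path: a directed path (all steps but the last oriented in `O`) followed by
an unoriented edge, imagined with the direction that would extend the path. -/
def IsHalfOpenPath (O : G.PartialOrientation) (p : List (G.E × Bool)) : Prop :=
  2 ≤ p.length ∧
  List.Chain' (fun s t => G.dhead s.1 s.2 = G.dtail t.1 t.2) p ∧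
  (p.map Prod.fst).Nodup ∧
  (∀ s ∈ p.dropLast, O s.1 = some s.2) ∧
  ∀ h : p ≠ [], O (p.getLast h).1 = none

/-- `O'` is obtained from `O` by reversing one directed cut. -/
def cutRev (O O' : G.PartialOrientation) : Prop :=
  ∃ X, G.IsDirCut O X ∧ (∀ e, ¬ G.crosses X e → O' e = O e) ∧
    (∀ e, G.crosses X e → O' e = (O e).map not)

/-- `O'` is obtained from `O` by reversing one directed cycle. -/
def cycleRev (O O' : G.PartialOrientation) : Prop :=
  ∃ c, G.IsDCycle O c ∧ (∀ e, e ∉ c.map Prod.fst → O' e = O e) ∧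
    (∀ s ∈ c, O' s.1 = some (!s.2))

/-- `O'` is obtained from `O` by a Jacob's ladder cascade along a half-open path:
the first edge becomes unoriented and all other edges get the reversed direction. -/
def cascade (O O' : G.PartialOrientation) : Prop :=
  ∃ p, G.IsHalfOpenPath O p ∧ (∀ e, e ∉ p.map Prod.fst → O' e = O e) ∧
    (∀ h : p ≠ [], O' (p.head h).1 = none) ∧
    (∀ s ∈ p.tail, O' s.1 = some (!s.2))

/-- An edge pivot at a vertex `v`: unorient an edge `e'` oriented into `v` and orient a
previously unoriented edge `e` toward `v`. -/
def pivot (O O' : G.PartialOrientation) : Prop :=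
  ∃ e e' b b', e ≠ e' ∧ O e = none ∧ O e' = some b' ∧
    G.dhead e b = G.dhead e' b' ∧
    O' e = some b ∧ O' e' = none ∧ ∀ f, f ≠ e → f ≠ e' → O' f = O f

/-- A directed cut of `O` is minimal w.r.t. `(<, A)` if its `<`-minimum crossing edge is
oriented as in the reference orientation `A`. -/
def MinimalCut [LinearOrder G.E] (A : G.E → Bool) (O : G.PartialOrientation)
    (X : Set G.V) : Prop :=
  ∃ e, G.crosses X e ∧ (∀ e', G.crosses X e' → e ≤ e') ∧ O e = some (A e)

/-- A partial orientation is cut minimal if every directed cut in it is minimal. -/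
def CutMinimal [LinearOrder G.E] (A : G.E → Bool) (O : G.PartialOrientation) : Prop :=
  ∀ X, G.IsDirCut O X → G.MinimalCut A O X

/-- A list of steps is minimal w.r.t. `(<, A)` if its `<`-minimum edge is traversed in the
direction given by the reference orientation `A`. -/
def MinimalSteps [LinearOrder G.E] (A : G.E → Bool) (c : List (G.E × Bool)) : Prop :=
  ∃ s ∈ c, (∀ t ∈ c, s.1 ≤ t.1) ∧ s.2 = A s.1

/-- A partial orientation is cycle minimal if every directed cycle in it is minimal. -/
def CycleMinimal [LinearOrder G.E] (A : G.E → Bool) (O : G.PartialOrientation) : Prop :=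
  ∀ c, G.IsDCycle O c → G.MinimalSteps A c

/-- A partial orientation is cycle-path minimal if every directed cycle and every
half-open path in it is minimal. -/
def CyclePathMinimal [LinearOrder G.E] (A : G.E → Bool) (O : G.PartialOrientation) : Prop :=
  G.CycleMinimal A O ∧ ∀ p, G.IsHalfOpenPath O p → G.MinimalSteps A p

/-- The indegree of a vertex: the number of edges oriented toward it. -/
def indeg (O : G.PartialOrientation) (v : G.V) : ℕ :=
  Nat.card {e : G.E // ∃ b, O e = some b ∧ G.dhead e b = v}

/-- Orient the (previously unoriented) edge `e` in direction `b`. -/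
def orient (O : G.PartialOrientation) (e : G.E) (b : Bool) : G.PartialOrientation :=
  fun f => if f = e then some b else O f

/-- Deletion of the edge `e`. -/
def deleteEdge (e : G.E) : Multigraph where
  V := G.V
  E := {f : G.E // f ≠ e}
  fintypeE := Subtype.fintype _
  fst := fun f => G.fst f.1
  snd := fun f => G.snd f.1

/-- Contraction of the edge `e`: identify its two endpoints and remove `e`. -/
def contractEdge (e : G.E) : Multigraph where
  V := Quot (fun a b => a = G.fst e ∧ b = G.snd e)
  E := {f : G.E // f ≠ e}
  fintypeV := Fintype.ofSurjective (Quot.mk _) (Quot.mk_surjective)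
  fintypeE := Subtype.fintype _
  fst := fun f => Quot.mk _ (G.fst f.1)
  snd := fun f => Quot.mk _ (G.snd f.1)

/-- The number of acyclic partial orientations of `G`. -/
def numAcyclic : ℕ := Nat.card {O : G.PartialOrientation // G.Acyclic O}

/-- The number of strongly connected partial orientations of `G`. -/
def numStrong : ℕ := Nat.card {O : G.PartialOrientation // G.StronglyConnected O}

end Multigraph

/-!
Write `Φ(G) = ∑_{S ⊆ E} (-1)^{c(S)} 2^{|S|}`, where `c(S)` counts the components of `(V, S)`.
The subgraph expansion gives `2^{n-1} T_G(1/2, 3) = -Φ(G)` for connected `G`, and splitting the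
sum according to whether `S` contains a fixed edge `e` gives `Φ(G) = Φ(G \ e) + 2 Φ(G / e)`, with
`Φ(G \ e) = -Φ(G / e)` when `e` is a bridge.

The number `N(G)` of strongly connected partial orientations obeys the same recursion. Fix the
orientation `O'` of the edges other than `e`. Leaving `e` unoriented yields a strongly connected
partial orientation iff `O'` is strongly connected on `G / e`; orienting `e` does so iff, in
addition, no directed cut passes through `e` in that direction. Orienting a bridge either way
creates such a cut, so `N(G) = N(G / e)`. Otherwise a directed cut through `e` exists exactly
when `O'` is strongly connected on `G / e` but not on `G \ e`, and then only in one direction; so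
`N(G) = N(G \ e) + 2 N(G / e)`. Induction on the number of edges gives `N(G) = -Φ(G)`.
-/

namespace Multigraph

open Finset

variable {G : Multigraph}

section Reachability

variable {S T : Set G.E} {X : Set G.V} {u v : G.V}

theorem adjOn_symm (h : G.adjOn S u v) : G.adjOn S v u := by
  obtain ⟨e, he, h⟩ := h
  exact ⟨e, he, h.symm⟩

theorem reachOn_symm (h : G.reachOn S u v) : G.reachOn S v u := by
  induction h with
  | refl => exact .refl
  | tail _ hadj ih => exact .head (adjOn_symm hadj) ih

theorem reachOn_equivalence (S : Set G.E) : Equivalence (G.reachOn S) :=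
  ⟨fun _ => .refl, reachOn_symm, .trans⟩

theorem reachOn_mono (hST : S ⊆ T) (h : G.reachOn S u v) : G.reachOn T u v :=
  Relation.ReflTransGen.mono (fun _ _ ⟨e, he, h⟩ => ⟨e, hST he, h⟩) _ _ h

theorem quot_mk_eq_iff_reachOn :
    Quot.mk (G.reachOn S) u = Quot.mk (G.reachOn S) v ↔ G.reachOn S u v :=
  (Quot.eq).trans (reachOn_equivalence S).eqvGen_iff

theorem exists_crosses_of_reachOn (h : G.reachOn S u v) (hu : u ∈ X) (hv : v ∉ X) :
    ∃ f ∈ S, G.crosses X f := by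
  induction h with
  | refl => exact absurd hu hv
  | @tail c d _ hcd ih =>
    by_cases hc : c ∈ X
    · obtain ⟨f, hf, h | h⟩ := hcd
      · exact ⟨f, hf, by grind [crosses]⟩
      · exact ⟨f, hf, by grind [crosses]⟩
    · exact ih hc

theorem Connected.mem_of_forall_not_crosses (hG : G.Connected) (hX : ∀ f, ¬ G.crosses X f)
    (hu : u ∈ X) : v ∈ X := by
  by_contra hv
  obtain ⟨f, -, hf⟩ := exists_crosses_of_reachOn (hG u v) hu hv
  exact hX f hf

theorem reachOn_insert_cases {e : G.E} (h : G.reachOn (insert e S) u v) :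
    G.reachOn S u v ∨ (G.reachOn S u (G.fst e) ∧ G.reachOn S (G.snd e) v) ∨
      (G.reachOn S u (G.snd e) ∧ G.reachOn S (G.fst e) v) := by
  induction h with
  | refl => exact Or.inl .refl
  | @tail c d _ hcd ih =>
    obtain ⟨f, hf, hor⟩ := hcd
    rcases hf with rfl | hfS
    · have hrefl : ∀ w, G.reachOn S w w := fun _ => .refl
      rcases hor with ⟨rfl, rfl⟩ | ⟨rfl, rfl⟩ <;> rcases ih with h | ⟨h, -⟩ | ⟨h, -⟩ <;>
        simp [h, hrefl]
    · have hstep : G.adjOn S c d := ⟨f, hfS, hor⟩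
      rcases ih with h | ⟨h₁, h₂⟩ | ⟨h₁, h₂⟩
      · exact Or.inl (h.tail hstep)
      · exact Or.inr (Or.inl ⟨h₁, h₂.tail hstep⟩)
      · exact Or.inr (Or.inr ⟨h₁, h₂.tail hstep⟩)

end Reachability

section Components

variable {S T : Set G.E}

def compsMap (hST : S ⊆ T) : Quot (G.reachOn S) → Quot (G.reachOn T) :=
  Quot.map id fun _ _ => reachOn_mono hST

theorem compsMap_surjective (hST : S ⊆ T) : Function.Surjective (compsMap hST) := by
  rintro ⟨u⟩
  exact ⟨Quot.mk _ u, rfl⟩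

theorem comps_le_card (S : Set G.E) : G.comps S ≤ Fintype.card G.V := by
  rw [comps, ← Nat.card_eq_fintype_card]
  exact Nat.card_le_card_of_surjective _ Quot.mk_surjective

theorem comps_pos [Nonempty G.V] (S : Set G.E) : 0 < G.comps S :=
  Nat.card_pos_iff.mpr ⟨⟨Quot.mk _ (Classical.arbitrary _)⟩, inferInstance⟩

theorem comps_univ_of_connected [Nonempty G.V] (hG : G.Connected) : G.comps Set.univ = 1 := by
  rw [comps, Nat.card_eq_one_iff_unique]
  refine ⟨⟨?_⟩, ⟨Quot.mk _ (Classical.arbitrary _)⟩⟩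
  rintro ⟨u⟩ ⟨v⟩
  exact Quot.sound (hG u v)

theorem comps_empty : G.comps ∅ = Fintype.card G.V := by
  have hinj : Function.Injective (Quot.mk (G.reachOn ∅)) := fun u v h => by
    induction quot_mk_eq_iff_reachOn.mp h with
    | refl => rfl
    | tail _ hadj =>
      obtain ⟨f, hf, -⟩ := hadj
      exact absurd hf (Set.notMem_empty f)
  rw [comps, ← Nat.card_eq_fintype_card]
  exact (Nat.card_eq_of_bijective _ ⟨hinj, Quot.mk_surjective⟩).symm

theorem comps_le_comps_insert_add_one (S : Set G.E) (e : G.E) :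
    G.comps S ≤ G.comps (insert e S) + 1 := by
  let f := compsMap (Set.subset_insert e S)
  let y₀ : Quot (G.reachOn S) := Quot.mk _ (G.snd e)
  have hf : ∀ a b, f a = f b → a ≠ y₀ → b ≠ y₀ → a = b := by
    rintro ⟨u⟩ ⟨v⟩ hab hu hv
    rcases reachOn_insert_cases (quot_mk_eq_iff_reachOn.mp hab) with h | ⟨h₁, h₂⟩ | ⟨h₁, h₂⟩
    · exact Quot.sound h
    · exact absurd (Quot.sound h₂).symm hv
    · exact absurd (Quot.sound h₁) hu
  have hinj :
      Function.Injective fun a => if a = y₀ then (Sum.inr () : _ ⊕ Unit) else .inl (f a) := by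
    intro a b hab
    by_cases ha : a = y₀ <;> by_cases hb : b = y₀ <;> simp only [ha, hb, if_true, if_false,
      reduceCtorEq, Sum.inl.injEq] at hab
    · exact ha.trans hb.symm
    · exact hf a b hab ha hb
  calc G.comps S ≤ Nat.card (Quot (G.reachOn (insert e S)) ⊕ Unit) :=
        Nat.card_le_card_of_injective _ hinj
    _ = G.comps (insert e S) + 1 := by simp [comps]

theorem comps_insert_lt {e : G.E} (h : ¬ G.reachOn S (G.fst e) (G.snd e)) :
    G.comps (insert e S) < G.comps S := by
  have : Fintype (Quot (G.reachOn S)) := Fintype.ofFinite _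
  have : Fintype (Quot (G.reachOn (insert e S))) := Fintype.ofFinite _
  rw [comps, comps, Nat.card_eq_fintype_card, Nat.card_eq_fintype_card]
  refine Fintype.card_lt_of_surjective_not_injective _ (compsMap_surjective (Set.subset_insert e S))
    fun hinj => h (quot_mk_eq_iff_reachOn.mp (@hinj (Quot.mk _ _) (Quot.mk _ _) ?_))
  exact Quot.sound (Relation.ReflTransGen.single ⟨e, Set.mem_insert e S, Or.inl ⟨rfl, rfl⟩⟩)

theorem card_le_card_add_comps (S : Finset G.E) : Fintype.card G.V ≤ #S + G.comps S := by
  induction S using Finset.induction_on with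
  | empty => simp [comps_empty]
  | @insert e S he ih =>
    have := comps_le_comps_insert_add_one (G := G) S e
    rw [card_insert_of_notMem he, coe_insert]
    omega

end Components

section DeletionContraction

variable {e : G.E} {S : Set G.E} {T : Set (G.contractEdge e).E} {u v : G.V}

theorem reachOn_of_reachOn_insert (he : G.reachOn S (G.fst e) (G.snd e))
    (h : G.reachOn (insert e S) u v) : G.reachOn S u v := by
  rcases reachOn_insert_cases h with h | ⟨h₁, h₂⟩ | ⟨h₁, h₂⟩
  · exact h
  · exact (h₁.trans he).trans h₂
  · exact (h₁.trans (reachOn_symm he)).trans h₂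

theorem reachOn_deleteEdge (T : Set (G.deleteEdge e).E) :
    (G.deleteEdge e).reachOn T = G.reachOn (Subtype.val '' T) := by
  have hadj : (G.deleteEdge e).adjOn T = G.adjOn (Subtype.val '' T) := by
    ext u v
    constructor
    · rintro ⟨f, hf, h⟩
      exact ⟨f.1, ⟨f, hf, rfl⟩, h⟩
    · rintro ⟨_, ⟨f, hf, rfl⟩, h⟩
      exact ⟨f, hf, h⟩
  exact congrArg Relation.ReflTransGen hadj

theorem comps_deleteEdge (T : Set (G.deleteEdge e).E) :
    (G.deleteEdge e).comps T = G.comps (Subtype.val '' T) :=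
  congrArg (fun r => Nat.card (Quot r)) (reachOn_deleteEdge T)

theorem connected_deleteEdge (hG : G.Connected) (hbr : ¬ G.IsBridge e) :
    (G.deleteEdge e).Connected := by
  intro u v
  have himage : Subtype.val '' (Set.univ : Set (G.deleteEdge e).E) = {f | f ≠ e} := by
    ext f
    exact ⟨fun ⟨f', _, h⟩ => h ▸ f'.2, fun hf => ⟨⟨f, hf⟩, trivial, rfl⟩⟩
  rw [reachOn_deleteEdge, himage]
  exact reachOn_of_reachOn_insert (not_not.mp hbr)
    (reachOn_mono (fun f _ => _root_.em (f = e)) (hG u v))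

theorem reachOn_contractEdge_mk (h : G.reachOn (insert e (Subtype.val '' T)) u v) :
    (G.contractEdge e).reachOn T (Quot.mk _ u) (Quot.mk _ v) := by
  induction h with
  | refl => exact .refl
  | @tail c d _ hcd ih =>
    obtain ⟨f, hf | ⟨f, hfT, rfl⟩, hor⟩ := hcd
    · have hfe : (Quot.mk _ (G.fst e) : (G.contractEdge e).V) = Quot.mk _ (G.snd e) :=
        Quot.sound ⟨rfl, rfl⟩
      subst hf
      rcases hor with ⟨rfl, rfl⟩ | ⟨rfl, rfl⟩
      exacts [hfe ▸ ih, hfe ▸ ih]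
    · refine ih.tail ⟨f, hfT, ?_⟩
      rcases hor with ⟨rfl, rfl⟩ | ⟨rfl, rfl⟩
      exacts [Or.inl ⟨rfl, rfl⟩, Or.inr ⟨rfl, rfl⟩]

def contractEdgeVertexClass (T : Set (G.contractEdge e).E) :
    (G.contractEdge e).V → Quot (G.reachOn (insert e (Subtype.val '' T))) :=
  Quot.lift (Quot.mk _) fun _ _ ⟨ha, hb⟩ =>
    Quot.sound (.single ⟨e, Set.mem_insert e _, Or.inl ⟨ha.symm, hb.symm⟩⟩)

theorem contractEdgeVertexClass_eq_of_reachOn {p q : (G.contractEdge e).V}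
    (h : (G.contractEdge e).reachOn T p q) :
    contractEdgeVertexClass T p = contractEdgeVertexClass T q := by
  induction h with
  | refl => rfl
  | tail _ hpq ih =>
    obtain ⟨f, hf, hor⟩ := hpq
    have hstep : G.reachOn (insert e (Subtype.val '' T)) (G.fst f.1) (G.snd f.1) :=
      .single ⟨f.1, Set.mem_insert_of_mem _ ⟨f, hf, rfl⟩, Or.inl ⟨rfl, rfl⟩⟩
    rcases hor with ⟨rfl, rfl⟩ | ⟨rfl, rfl⟩
    exacts [ih.trans (Quot.sound hstep), ih.trans (Quot.sound hstep).symm]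

def contractEdgeCompsEquiv (T : Set (G.contractEdge e).E) :
    Quot (G.reachOn (insert e (Subtype.val '' T))) ≃ Quot ((G.contractEdge e).reachOn T) where
  toFun := Quot.lift (fun u => Quot.mk _ (Quot.mk _ u))
    fun _ _ h => Quot.sound (reachOn_contractEdge_mk h)
  invFun := Quot.lift (contractEdgeVertexClass T) fun _ _ => contractEdgeVertexClass_eq_of_reachOn
  left_inv := by rintro ⟨u⟩; rfl
  right_inv := by rintro ⟨⟨u⟩⟩; rfl

theorem comps_contractEdge (T : Set (G.contractEdge e).E) :
    (G.contractEdge e).comps T = G.comps (insert e (Subtype.val '' T)) :=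
  (Nat.card_congr (contractEdgeCompsEquiv T)).symm

theorem connected_contractEdge (hG : G.Connected) : (G.contractEdge e).Connected := by
  have huniv : Set.univ ⊆ insert e (Subtype.val '' (Set.univ : Set {f : G.E // f ≠ e})) :=
    fun f _ => by by_cases hf : f = e; exacts [Or.inl hf, Or.inr ⟨⟨f, hf⟩, trivial, rfl⟩]
  rintro ⟨u⟩ ⟨v⟩
  exact reachOn_contractEdge_mk (reachOn_mono huniv (hG u v))

end DeletionContraction

section Cuts

variable {O : G.PartialOrientation} {X Y : Set G.V}

def IsOutward (O : G.PartialOrientation) (X : Set G.V) : Prop :=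
  ∀ e, G.crosses X e → (G.fst e ∈ X → O e = some true) ∧ (G.snd e ∈ X → O e = some false)

theorem isDirCut_iff : G.IsDirCut O X ↔ (∃ e, G.crosses X e) ∧ G.IsOutward O X :=
  Iff.rfl

theorem IsOutward.inter (hX : G.IsOutward O X) (hY : G.IsOutward O Y) :
    G.IsOutward O (X ∩ Y) := by
  intro f hf
  constructor
  · rintro ⟨hfX, hfY⟩
    by_cases hsX : G.snd f ∈ X
    · exact (hY f (by grind [crosses])).1 hfY
    · exact (hX f (by grind [crosses])).1 hfX
  · rintro ⟨hsX, hsY⟩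
    by_cases hfX : G.fst f ∈ X
    · exact (hY f (by grind [crosses])).2 hsY
    · exact (hX f (by grind [crosses])).2 hsX

theorem IsOutward.union (hX : G.IsOutward O X) (hY : G.IsOutward O Y) :
    G.IsOutward O (X ∪ Y) := by
  intro f hf
  constructor
  · rintro (hfX | hfY)
    · exact (hX f (by grind [crosses])).1 hfX
    · exact (hY f (by grind [crosses])).1 hfY
  · rintro (hsX | hsY)
    · exact (hX f (by grind [crosses])).2 hsX
    · exact (hY f (by grind [crosses])).2 hsY

end Cuts

section ExtendAt

variable {e : G.E} {O' : {f : G.E // f ≠ e} → Option Bool} {x : Option Bool} {X : Set G.V}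

def extendAt (e : G.E) (O' : {f : G.E // f ≠ e} → Option Bool) (x : Option Bool) :
    G.PartialOrientation :=
  (Equiv.funSplitAt e (Option Bool)).symm (x, O')

@[simp]
theorem extendAt_self : extendAt e O' x e = x := by
  simp [extendAt]

theorem extendAt_of_ne {f : G.E} (hf : f ≠ e) : extendAt e O' x f = O' ⟨f, hf⟩ := by
  simp [extendAt, hf]

theorem isOutward_extendAt_iff :
    G.IsOutward (extendAt e O' x) X ↔
      (G.crosses X e → (G.fst e ∈ X → x = some true) ∧ (G.snd e ∈ X → x = some false)) ∧
        (G.deleteEdge e).IsOutward O' X := by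
  constructor
  · intro h
    refine ⟨fun he => by simpa only [extendAt_self] using h e he, ?_⟩
    rintro ⟨f, hfe⟩ hf
    have := h f hf
    rwa [extendAt_of_ne hfe] at this
  · rintro ⟨he, h⟩ f hf
    by_cases hfe : f = e
    · subst hfe
      simpa only [extendAt_self] using he hf
    · have := h ⟨f, hfe⟩ hf
      rwa [extendAt_of_ne hfe]

theorem isDirCut_extendAt_iff_of_not_crosses (he : ¬ G.crosses X e) :
    G.IsDirCut (extendAt e O' x) X ↔ (G.deleteEdge e).IsDirCut O' X := by
  refine (isDirCut_iff.trans ?_).trans (isDirCut_iff (G := G.deleteEdge e) (O := O')).symm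
  rw [isOutward_extendAt_iff]
  refine and_congr ⟨fun ⟨f, hf⟩ => ⟨(⟨f, fun h => he (h ▸ hf)⟩ : {f : G.E // f ≠ e}), hf⟩,
    fun ⟨f, hf⟩ => ⟨f.1, hf⟩⟩ ?_
  exact ⟨fun h => h.2, fun h => ⟨fun h' => absurd h' he, h⟩⟩

theorem not_crosses_preimage_mk (X' : Set (G.contractEdge e).V) :
    ¬ G.crosses (Quot.mk _ ⁻¹' X') e := by
  have hfe : (Quot.mk _ (G.fst e) : (G.contractEdge e).V) = Quot.mk _ (G.snd e) :=
    Quot.sound ⟨rfl, rfl⟩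
  intro h
  refine h ?_
  change (Quot.mk _ (G.fst e) : (G.contractEdge e).V) ∈ X' ↔ Quot.mk _ (G.snd e) ∈ X'
  rw [hfe]

theorem contractEdge_stronglyConnected_iff :
    (G.contractEdge e).StronglyConnected O' ↔
      ∀ X, ¬ G.crosses X e → ¬ (G.deleteEdge e).IsDirCut O' X := by
  refine ⟨fun h X he hX => h ?_, fun h ⟨X', hX'⟩ => h _ (not_crosses_preimage_mk X') hX'⟩
  -- a vertex set not separating the ends of `e` descends to `G / e`
  refine ⟨Quot.lift (· ∈ X) ?_, hX⟩
  rintro _ _ ⟨rfl, rfl⟩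
  exact propext (not_not.mp he)

theorem StronglyConnected.contractEdge (h : (G.deleteEdge e).StronglyConnected O') :
    (G.contractEdge e).StronglyConnected O' :=
  contractEdge_stronglyConnected_iff.mpr fun X _ hX => h ⟨X, hX⟩

def HasDirCutThrough (e : G.E) (O' : {f : G.E // f ≠ e} → Option Bool) (x : Option Bool) :
    Prop :=
  ∃ X, G.crosses X e ∧ G.IsDirCut (extendAt e O' x) X

theorem not_hasDirCutThrough_none : ¬ G.HasDirCutThrough e O' none := by
  rintro ⟨X, he, hX⟩
  have := (isOutward_extendAt_iff.mp hX.2).1 he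
  simp only [reduceCtorEq, imp_false] at this
  exact he (iff_of_false this.1 this.2)

theorem stronglyConnected_extendAt_iff :
    G.StronglyConnected (extendAt e O' x) ↔
      (G.contractEdge e).StronglyConnected O' ∧ ¬ G.HasDirCutThrough e O' x := by
  rw [contractEdge_stronglyConnected_iff]
  simp only [StronglyConnected, HasDirCutThrough]
  constructor
  · intro h
    exact ⟨fun X he hX => h ⟨X, (isDirCut_extendAt_iff_of_not_crosses he).mpr hX⟩,
      fun ⟨X, _, hX⟩ => h ⟨X, hX⟩⟩
  · rintro ⟨hc, hx⟩ ⟨X, hX⟩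
    by_cases he : G.crosses X e
    · exact hx ⟨X, he, hX⟩
    · exact hc X he ((isDirCut_extendAt_iff_of_not_crosses he).mp hX)

end ExtendAt

section ThroughCuts

variable {e : G.E} {O' : {f : G.E // f ≠ e} → Option Bool} {x : Option Bool} {X : Set G.V}

theorem crosses_compl {f : G.E} : G.crosses Xᶜ f ↔ G.crosses X f := by
  simp only [crosses, Set.mem_compl_iff, not_iff_not]

theorem exists_crosses_ne_of_not_isBridge (hbr : ¬ G.IsBridge e) (he : G.crosses X e) :
    ∃ f ≠ e, G.crosses X f := by
  have hpath := not_not.mp hbr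
  by_cases hfst : G.fst e ∈ X
  · exact exists_crosses_of_reachOn hpath hfst fun hsnd => he (iff_of_true hfst hsnd)
  · exact exists_crosses_of_reachOn (reachOn_symm hpath) (by grind [crosses]) hfst

theorem forall_not_crosses_of_isOutward (hc : (G.contractEdge e).StronglyConnected O')
    (hX : (G.deleteEdge e).IsOutward O' X) (he : ¬ G.crosses X e) (f : G.E) :
    ¬ G.crosses X f := fun hf =>
  contractEdge_stronglyConnected_iff.mp hc X he
    ⟨⟨(⟨f, fun h => he (h ▸ hf)⟩ : {f : G.E // f ≠ e}), hf⟩, hX⟩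

theorem HasDirCutThrough.not_stronglyConnected_deleteEdge (hbr : ¬ G.IsBridge e)
    (h : G.HasDirCutThrough e O' x) : ¬ (G.deleteEdge e).StronglyConnected O' := by
  obtain ⟨X, he, hX⟩ := h
  obtain ⟨f, hfe, hf⟩ := exists_crosses_ne_of_not_isBridge hbr he
  exact not_not.mpr ⟨X, ⟨(⟨f, hfe⟩ : {f : G.E // f ≠ e}), hf⟩,
    (isOutward_extendAt_iff.mp hX.2).2⟩

theorem exists_hasDirCutThrough (hc : (G.contractEdge e).StronglyConnected O')
    (hd : ¬ (G.deleteEdge e).StronglyConnected O') : ∃ b, G.HasDirCutThrough e O' (some b) := by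
  obtain ⟨X, hX⟩ := not_not.mp hd
  have he : G.crosses X e := fun h => contractEdge_stronglyConnected_iff.mp hc X (not_not.mpr h) hX
  by_cases hfst : G.fst e ∈ X
  · refine ⟨true, X, he, ⟨e, he⟩, isOutward_extendAt_iff.mpr ⟨fun _ => ?_, hX.2⟩⟩
    exact ⟨fun _ => rfl, fun hsnd => absurd (iff_of_true hfst hsnd) he⟩
  · refine ⟨false, X, he, ⟨e, he⟩, isOutward_extendAt_iff.mpr ⟨fun _ => ?_, hX.2⟩⟩
    exact ⟨fun h => absurd h hfst, fun _ => rfl⟩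

/-- Two directed cuts through `e` in opposite directions would force each other to be
complementary, and then a second edge across them would have to point both ways. -/
theorem not_hasDirCutThrough_true_and_false (hG : G.Connected) (hbr : ¬ G.IsBridge e)
    (hc : (G.contractEdge e).StronglyConnected O') :
    ¬ (G.HasDirCutThrough e O' (some true) ∧ G.HasDirCutThrough e O' (some false)) := by
  rintro ⟨⟨X, heX, hX⟩, ⟨Y, heY, hY⟩⟩
  obtain ⟨hXe, hX⟩ := isOutward_extendAt_iff.mp hX.2
  obtain ⟨hYe, hY⟩ := isOutward_extendAt_iff.mp hY.2
  have hsX : G.snd e ∉ X := fun h => by simpa using (hXe heX).2 h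
  have hfY : G.fst e ∉ Y := fun h => by simpa using (hYe heY).1 h
  have hfX : G.fst e ∈ X := by_contra fun h => heX (iff_of_false h hsX)
  have hsY : G.snd e ∈ Y := by_contra fun h => heY (iff_of_false hfY h)
  have heXY : ¬ G.crosses (X ∩ Y) e := fun h => h (iff_of_false (hfY ·.2) (hsX ·.1))
  have heXY' : ¬ G.crosses (X ∪ Y) e := fun h => h (iff_of_true (Or.inl hfX) (Or.inr hsY))
  have hinter : ∀ v, v ∉ X ∩ Y := fun v hv => hfY (hG.mem_of_forall_not_crosses
    (forall_not_crosses_of_isOutward hc (hX.inter hY) heXY) hv).2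
  have hunion : ∀ v, v ∈ X ∪ Y := fun v => hG.mem_of_forall_not_crosses
    (forall_not_crosses_of_isOutward hc (hX.union hY) heXY') (Or.inl hfX)
  obtain ⟨f, hfe, hf⟩ := exists_crosses_ne_of_not_isBridge hbr heX
  have hfst₁ := hinter (G.fst f)
  have hsnd₁ := hinter (G.snd f)
  have hfst₂ := hunion (G.fst f)
  have hsnd₂ := hunion (G.snd f)
  have hfY' : G.crosses Y f := by grind [crosses]
  have h₁ : (G.fst f ∈ X → O' ⟨f, hfe⟩ = some true) ∧ (G.snd f ∈ X → O' ⟨f, hfe⟩ = some false) :=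
    hX ⟨f, hfe⟩ hf
  have h₂ : (G.fst f ∈ Y → O' ⟨f, hfe⟩ = some true) ∧ (G.snd f ∈ Y → O' ⟨f, hfe⟩ = some false) :=
    hY ⟨f, hfe⟩ hfY'
  grind [crosses]

theorem hasDirCutThrough_of_isBridge (hbr : G.IsBridge e) (b : Bool) :
    G.HasDirCutThrough e O' (some b) := by
  let X : Set G.V := {v | G.reachOn {f | f ≠ e} (G.fst e) v}
  have hfst : G.fst e ∈ X := Relation.ReflTransGen.refl
  have he : G.crosses X e := fun h => hbr (h.mp hfst)
  have hX : ∀ f : G.E, f ≠ e → ¬ G.crosses X f := fun f hfe hf =>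
    hf ⟨fun h => h.tail ⟨f, hfe, Or.inl ⟨rfl, rfl⟩⟩, fun h => h.tail ⟨f, hfe, Or.inr ⟨rfl, rfl⟩⟩⟩
  cases b
  · refine ⟨Xᶜ, crosses_compl.mpr he, ⟨e, crosses_compl.mpr he⟩,
      isOutward_extendAt_iff.mpr ⟨fun _ => ⟨fun h => absurd hfst h, fun _ => rfl⟩, ?_⟩⟩
    exact fun f hf => absurd (crosses_compl.mp hf) (hX f.1 f.2)
  · refine ⟨X, he, ⟨e, he⟩,
      isOutward_extendAt_iff.mpr ⟨fun _ => ⟨fun _ => rfl, fun h => absurd h hbr⟩, ?_⟩⟩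
    exact fun f hf => absurd hf (hX f.1 f.2)

end ThroughCuts

section Counting

variable {e : G.E}

theorem card_subtype_eq_sum {α : Type*} [Fintype α] (p : α → Prop) :
    Nat.card {a // p a} = ∑ a, if p a then 1 else 0 := by
  rw [Nat.card_eq_fintype_card, Fintype.card_subtype, card_filter]

theorem numStrong_deleteEdge_eq_sum (e : G.E) :
    (G.deleteEdge e).numStrong = ∑ O' : {f : G.E // f ≠ e} → Option Bool,
      if (G.deleteEdge e).StronglyConnected O' then 1 else 0 :=
  card_subtype_eq_sum (α := {f : G.E // f ≠ e} → Option Bool) _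

theorem numStrong_contractEdge_eq_sum (e : G.E) :
    (G.contractEdge e).numStrong = ∑ O' : {f : G.E // f ≠ e} → Option Bool,
      if (G.contractEdge e).StronglyConnected O' then 1 else 0 :=
  card_subtype_eq_sum (α := {f : G.E // f ≠ e} → Option Bool) _

theorem numStrong_eq_sum_extendAt (e : G.E) :
    G.numStrong = ∑ O' : {f : G.E // f ≠ e} → Option Bool,
      ∑ x, if G.StronglyConnected (extendAt e O' x) then 1 else 0 := by
  rw [numStrong, card_subtype_eq_sum, ← (Equiv.funSplitAt e (Option Bool)).symm.sum_comp,
    Fintype.sum_prod_type_right]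
  rfl

theorem sum_stronglyConnected_extendAt (hG : G.Connected) (hbr : ¬ G.IsBridge e)
    (O' : {f : G.E // f ≠ e} → Option Bool) :
    (∑ x, if G.StronglyConnected (extendAt e O' x) then 1 else 0) =
      (if (G.deleteEdge e).StronglyConnected O' then 1 else 0) +
        2 * if (G.contractEdge e).StronglyConnected O' then 1 else 0 := by
  simp only [stronglyConnected_extendAt_iff, Fintype.sum_option, Fintype.sum_bool,
    not_hasDirCutThrough_none]
  by_cases hc : (G.contractEdge e).StronglyConnected O'
  · by_cases hd : (G.deleteEdge e).StronglyConnected O'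
    · have hb : ∀ b, ¬ G.HasDirCutThrough e O' (some b) := fun b h =>
        h.not_stronglyConnected_deleteEdge hbr hd
      simp [hc, hd, hb]
    · obtain ⟨b, hb⟩ := exists_hasDirCutThrough hc hd
      have := not_hasDirCutThrough_true_and_false hG hbr hc
      cases b <;> simp_all
  · have hd : ¬ (G.deleteEdge e).StronglyConnected O' := mt StronglyConnected.contractEdge hc
    simp [hc, hd]

theorem sum_stronglyConnected_extendAt_of_isBridge (hbr : G.IsBridge e)
    (O' : {f : G.E // f ≠ e} → Option Bool) :
    (∑ x, if G.StronglyConnected (extendAt e O' x) then 1 else 0) =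
      if (G.contractEdge e).StronglyConnected O' then 1 else 0 := by
  simp only [stronglyConnected_extendAt_iff, Fintype.sum_option, Fintype.sum_bool,
    not_hasDirCutThrough_none, hasDirCutThrough_of_isBridge hbr]
  simp

theorem numStrong_eq_of_not_isBridge (hG : G.Connected) (hbr : ¬ G.IsBridge e) :
    G.numStrong = (G.deleteEdge e).numStrong + 2 * (G.contractEdge e).numStrong := by
  rw [numStrong_eq_sum_extendAt e, numStrong_deleteEdge_eq_sum, numStrong_contractEdge_eq_sum,
    mul_sum, ← sum_add_distrib]
  exact sum_congr rfl fun O' _ => sum_stronglyConnected_extendAt hG hbr O'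

theorem numStrong_eq_of_isBridge (hbr : G.IsBridge e) :
    G.numStrong = (G.contractEdge e).numStrong := by
  rw [numStrong_eq_sum_extendAt e, numStrong_contractEdge_eq_sum]
  exact sum_congr rfl fun O' _ => sum_stronglyConnected_extendAt_of_isBridge hbr O'

theorem numStrong_of_isEmpty [IsEmpty G.E] : G.numStrong = 1 := by
  rw [numStrong, Nat.card_eq_one_iff_unique]
  refine ⟨⟨fun _ _ => Subtype.ext (funext isEmptyElim)⟩, ⟨⟨isEmptyElim, ?_⟩⟩⟩
  rintro ⟨X, ⟨f, -⟩, -⟩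
  exact isEmptyElim f

end Counting

section SignedSubgraphSum

theorem sum_finset_eq_sum_finset_subtype_ne {α M : Type*} [Fintype α] [DecidableEq α]
    [AddCommMonoid M] (e : α) (g : Finset α → M) :
    ∑ S, g S = ∑ T : Finset {a // a ≠ e},
      (g (T.map (Function.Embedding.subtype _)) +
        g (insert e (T.map (Function.Embedding.subtype _)))) := by
  have hpow : (univ.erase e).powerset =
      univ.map (mapEmbedding (Function.Embedding.subtype (· ≠ e))).toEmbedding := by
    ext S
    simp only [mem_powerset, subset_erase, mem_map, mem_univ, true_and, subset_univ]
    refine ⟨fun h => ⟨S.subtype (· ≠ e), subtype_map_of_mem fun x hx => ?_⟩, ?_⟩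
    · rintro rfl
      exact h hx
    · rintro ⟨T, rfl⟩
      simp
  rw [← powerset_univ, ← insert_erase (mem_univ e), sum_powerset_insert (notMem_erase e _),
    ← sum_add_distrib, hpow, sum_map]
  rfl

def signedSubgraphSum (G : Multigraph) : ℤ :=
  ∑ S : Finset G.E, (-1) ^ G.comps S * 2 ^ #S

variable {e : G.E}

theorem signedSubgraphSum_deleteEdge (e : G.E) :
    (G.deleteEdge e).signedSubgraphSum =
      ∑ T : Finset {f : G.E // f ≠ e},
        (-1) ^ G.comps (Subtype.val '' (T : Set {f : G.E // f ≠ e})) * 2 ^ #T :=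
  sum_congr rfl fun T _ => by rw [comps_deleteEdge]; rfl

theorem signedSubgraphSum_contractEdge (e : G.E) :
    (G.contractEdge e).signedSubgraphSum = ∑ T : Finset {f : G.E // f ≠ e},
      (-1) ^ G.comps (insert e (Subtype.val '' (T : Set {f : G.E // f ≠ e}))) * 2 ^ #T :=
  sum_congr rfl fun T _ => by rw [comps_contractEdge]; rfl

theorem signedSubgraphSum_eq_deleteEdge_add_contractEdge (e : G.E) :
    G.signedSubgraphSum =
      (G.deleteEdge e).signedSubgraphSum + 2 * (G.contractEdge e).signedSubgraphSum := by
  rw [signedSubgraphSum, sum_finset_eq_sum_finset_subtype_ne e, sum_add_distrib,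
    signedSubgraphSum_deleteEdge, signedSubgraphSum_contractEdge, mul_sum]
  congr 1 <;> refine sum_congr rfl fun T _ => ?_
  · rw [coe_map, Function.Embedding.coe_subtype, card_map]
  · rw [coe_insert, coe_map, Function.Embedding.coe_subtype,
      card_insert_of_notMem (by simp), card_map, pow_succ]
    ring

theorem signedSubgraphSum_deleteEdge_of_isBridge (hbr : G.IsBridge e) :
    (G.deleteEdge e).signedSubgraphSum = -(G.contractEdge e).signedSubgraphSum := by
  rw [signedSubgraphSum_deleteEdge, signedSubgraphSum_contractEdge, ← sum_neg_distrib]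
  refine sum_congr rfl fun T _ => ?_
  set S : Set G.E := Subtype.val '' (T : Set {f : G.E // f ≠ e})
  have hS : S ⊆ {f | f ≠ e} := by
    rintro _ ⟨f, -, rfl⟩
    exact f.2
  have hlt : G.comps (insert e S) < G.comps S := comps_insert_lt fun h => hbr (reachOn_mono hS h)
  have hle := comps_le_comps_insert_add_one S e
  rw [show G.comps S = G.comps (insert e S) + 1 by omega, pow_succ]
  ring

theorem signedSubgraphSum_of_isEmpty [Nonempty G.V] [IsEmpty G.E] (hG : G.Connected) :
    G.signedSubgraphSum = -1 := by
  have hS : (∅ : Set G.E) = Set.univ := Subsingleton.elim _ _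
  rw [signedSubgraphSum, Fintype.sum_subsingleton _ ∅, coe_empty, hS, comps_univ_of_connected hG]
  norm_num

end SignedSubgraphSum

theorem numStrong_eq_neg_signedSubgraphSum [Nonempty G.V] (hG : G.Connected) :
    (G.numStrong : ℤ) = -G.signedSubgraphSum := by
  suffices ∀ n (H : Multigraph) [Nonempty H.V], Nat.card H.E = n → H.Connected →
      (H.numStrong : ℤ) = -H.signedSubgraphSum from this _ G rfl hG
  intro n
  induction n with
  | zero =>
    intro H _ hE hH
    have : IsEmpty H.E := Finite.card_eq_zero_iff.mp hE
    rw [numStrong_of_isEmpty, signedSubgraphSum_of_isEmpty hH]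
    norm_num
  | succ n ih =>
    intro H _ hE hH
    obtain ⟨e⟩ : Nonempty H.E := Nat.card_pos_iff.mp (by omega) |>.1
    have hcard : Nat.card {f : H.E // f ≠ e} = n := by
      rw [Nat.card_eq_fintype_card, Fintype.card_subtype_compl, Fintype.card_subtype_eq,
        ← Nat.card_eq_fintype_card, hE, Nat.add_sub_cancel]
    have : Nonempty (H.deleteEdge e).V := ‹Nonempty H.V›
    have : Nonempty (H.contractEdge e).V := ⟨Quot.mk _ (Classical.arbitrary H.V)⟩
    have ihc := ih (H.contractEdge e) hcard (connected_contractEdge hH)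
    rw [signedSubgraphSum_eq_deleteEdge_add_contractEdge e]
    by_cases hbr : H.IsBridge e
    · rw [numStrong_eq_of_isBridge hbr, ihc, signedSubgraphSum_deleteEdge_of_isBridge hbr]
      ring
    · rw [numStrong_eq_of_not_isBridge hH hbr, Nat.cast_add, Nat.cast_mul, ihc,
        ih (H.deleteEdge e) hcard (connected_deleteEdge hH hbr)]
      ring

theorem two_pow_mul_tutte_summand {n c k : ℕ} (hc : 1 ≤ c) (hcn : c ≤ n) (hn : n ≤ k + c) :
    (2 : ℚ) ^ (n - 1) * ((1 / 2 - 1) ^ ((n - 1) - (n - c)) * (3 - 1) ^ (k - (n - c))) =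
      -((-1) ^ c * 2 ^ k) := by
  obtain ⟨c, rfl⟩ := Nat.exists_eq_add_of_le' hc
  obtain ⟨m, rfl⟩ := Nat.exists_eq_add_of_le hcn
  obtain ⟨j, rfl⟩ := Nat.exists_eq_add_of_le (show m ≤ k by omega)
  have h₁ : c + 1 + m - 1 - (c + 1 + m - (c + 1)) = c := by omega
  have h₂ : m + j - (c + 1 + m - (c + 1)) = j := by omega
  have h₃ : c + 1 + m - 1 = c + m := by omega
  have h₄ : (1 / 2 - 1 : ℚ) = -1 / 2 := by norm_num
  rw [h₁, h₂, h₃, h₄, div_pow]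
  field_simp
  ring

theorem two_pow_mul_tutte_eq_neg_signedSubgraphSum [Nonempty G.V] (hG : G.Connected) :
    (2 : ℚ) ^ (Fintype.card G.V - 1) * G.tutte (1 / 2) 3 = -G.signedSubgraphSum := by
  rw [tutte, signedSubgraphSum, mul_sum, Int.cast_sum, ← sum_neg_distrib]
  refine sum_congr rfl fun S _ => ?_
  rw [rk, rk, comps_univ_of_connected hG]
  push_cast
  exact two_pow_mul_tutte_summand (comps_pos _) (comps_le_card _) (card_le_card_add_comps S)

theorem tutte_of_isEmpty [IsEmpty G.V] (x y : ℚ) : G.tutte x y = 1 := by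
  have : IsEmpty G.E := ⟨fun e => isEmptyElim (G.fst e)⟩
  rw [tutte, Fintype.sum_subsingleton _ ∅]
  simp [rk]

end Multigraph

/-- the number of strongly connected partial orientations of a connected
multigraph is `2^(n-1) · T(1/2, 3)`. -/
theorem stmt4 (G : Multigraph) (hG : G.Connected) :
    (G.numStrong : ℚ) = 2 ^ (Fintype.card G.V - 1) * G.tutte (1/2) 3 := by
  rcases isEmpty_or_nonempty G.V with hV | hV
  · have : IsEmpty G.E := ⟨fun e => isEmptyElim (G.fst e)⟩
    simp [Multigraph.numStrong_of_isEmpty, Multigraph.tutte_of_isEmpty]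
  · rw [Multigraph.two_pow_mul_tutte_eq_neg_signedSubgraphSum hG]
    exact_mod_cast Multigraph.numStrong_eq_neg_signedSubgraphSum hG
end
end

section
/- If two partial orientations O and O' of a multigraph orient the same edge set and differ by a sequence of directed cycle reversals, then their difference decomposes as an edge-disjoint union of directed cycles; hence every partial orientation is equivalent via cycle reversals to a unique cycle minimal partial orientation with respect to any fixed pair (<, A). -/
open Classical

noncomputable section

/-!
Reversing a directed cycle does not change any indegree. Conversely, if `O` and `O'` have the
same unoriented edges and the same indegrees, then the arcs of `O` that `O'` reverses form a
balanced arc set (every vertex is entered as often as it is left), and a balanced arc set is an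
arc-disjoint union of directed cycles: grow a path backwards inside it until it closes up.

Reversing a cycle that is not minimal turns its least edge to agree with `A` and leaves all
smaller edges alone, so it lexicographically decreases the indicator of the edges oriented
against `A`; hence a cycle minimal orientation is reached. If two cycle minimal orientations
were equivalent, the least edge on which they differ would lie on a directed cycle of each of
them inside the difference, and both would orient it as `A` does.
-/

namespace Arcs

variable {α V : Type*} (hd tl : α → V)

def IsCycle (l : List α) : Prop :=
  l ≠ [] ∧ l.Nodup ∧ (l ++ l.take 1).IsChain (fun a b => hd a = tl b)

def Balanced (S : Finset α) : Prop :=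
  ∀ v, (S.filter (hd · = v)).card = (S.filter (tl · = v)).card

variable {hd tl}

theorem map_dropLast_eq_map_tail_of_isChain :
    ∀ {p : List α}, p.IsChain (fun a b => hd a = tl b) → p.dropLast.map hd = p.tail.map tl
  | [], _ | [_], _ => rfl
  | a :: b :: p, h => by
    rw [List.isChain_cons_cons] at h
    simpa [h.1] using map_dropLast_eq_map_tail_of_isChain h.2

theorem IsCycle.balanced [DecidableEq α] {l : List α} (hl : IsCycle hd tl l) :
    Balanced hd tl l.toFinset := by
  obtain ⟨hne, hnd, hchain⟩ := hl
  obtain ⟨a, l, rfl⟩ := List.exists_cons_of_ne_nil hne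
  rw [show a :: l ++ (a :: l).take 1 = (a :: l) ++ [a] by simp] at hchain
  have hmap := map_dropLast_eq_map_tail_of_isChain hchain
  rw [List.dropLast_concat, List.cons_append, List.tail_cons] at hmap
  intro v
  have hcount := congrArg (List.countP (· = v)) hmap
  simp only [List.countP_map, Function.comp_def] at hcount
  rw [hnd.card_eq_countP, hnd.card_eq_countP, hcount]
  exact (List.perm_append_singleton a l).countP_eq _

theorem Balanced.sdiff {S C : Finset α} (hS : Balanced hd tl S) (hC : Balanced hd tl C)
    (hCS : C ⊆ S) : Balanced hd tl (S \ C) := by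
  have hcard (p : α → Prop) [DecidablePred p] :
      ((S \ C).filter p).card = (S.filter p).card - (C.filter p).card := by
    rw [← Finset.card_sdiff_of_subset (Finset.filter_subset_filter p hCS)]
    congr 1
    ext
    simp only [Finset.mem_filter, Finset.mem_sdiff]
    tauto
  intro v
  rw [hcard, hcard, hS v, hC v]

/- The first arc `a` of the path leaves `tl a`, so by balance some arc `b` of `S` enters it:
either `b` closes a cycle with an initial segment of the path, or the path grows to `b :: p`. -/
theorem Balanced.exists_isCycle_of_isChain {S : Finset α} (hS : Balanced hd tl S) :
    ∀ p : List α, p ≠ [] → p.Nodup → (∀ a ∈ p, a ∈ S) → p.IsChain (fun a b => hd a = tl b) →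
      ∃ l, IsCycle hd tl l ∧ ∀ a ∈ l, a ∈ S
  | a :: q, _, hnd, hpS, hchain => by
    obtain ⟨b, hbS, hb⟩ : ∃ b ∈ S, hd b = tl a := by
      have hpos : 0 < (S.filter (tl · = tl a)).card :=
        Finset.card_pos.mpr ⟨a, Finset.mem_filter.mpr ⟨hpS a List.mem_cons_self, rfl⟩⟩
      rw [← hS] at hpos
      obtain ⟨b, hb⟩ := Finset.card_pos.mp hpos
      exact ⟨b, Finset.mem_filter.mp hb⟩
    by_cases hbp : b ∈ a :: q
    · obtain ⟨s, r, hsr⟩ := List.append_of_mem hbp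
      have hpre : a :: q = (s ++ [b]) ++ r := by simp [hsr]
      have hhead : (s ++ [b]).head? = some a := by
        have := congrArg List.head? hsr
        simp only [List.head?_append, List.head?_cons] at this ⊢
        exact this.symm
      refine ⟨s ++ [b], ⟨by simp, hnd.sublist (hpre ▸ List.sublist_append_left _ _), ?_⟩,
        fun c hc => hpS c (hpre ▸ List.mem_append_left r hc)⟩
      have hchain' := (hpre ▸ hchain).left_of_append
      refine hchain'.append (hchain'.take 1) fun x hx y hy => ?_
      simp only [List.getLast?_concat, Option.mem_some_iff] at hx
      simp only [List.head?_take, hhead, if_neg one_ne_zero, Option.mem_some_iff] at hy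
      rw [← hx, ← hy, hb]
    · have hnd' : (b :: a :: q).Nodup := List.nodup_cons.mpr ⟨hbp, hnd⟩
      have hpS' : ∀ c ∈ b :: a :: q, c ∈ S := by
        simp only [List.mem_cons] at hpS ⊢
        grind
      have hlen : (b :: a :: q).length ≤ S.card := by
        rw [← List.toFinset_card_of_nodup hnd']
        exact Finset.card_le_card fun c hc => hpS' c (List.mem_toFinset.mp hc)
      exact hS.exists_isCycle_of_isChain (b :: a :: q) (List.cons_ne_nil _ _) hnd' hpS'
        (List.isChain_cons_cons.mpr ⟨hb, hchain⟩)
termination_by p => S.card - p.length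
decreasing_by
  simp only [List.length_cons] at hlen ⊢
  omega

theorem Balanced.exists_cycle_decomposition {S : Finset α} (hS : Balanced hd tl S) :
    ∃ L : List (List α), (∀ l ∈ L, IsCycle hd tl l) ∧ L.Pairwise List.Disjoint ∧
      ∀ a, a ∈ S ↔ ∃ l ∈ L, a ∈ l := by
  obtain rfl | ⟨a, ha⟩ := S.eq_empty_or_nonempty
  · exact ⟨[], by simp, .nil, by simp⟩
  obtain ⟨l, hl, hlS⟩ := hS.exists_isCycle_of_isChain [a] (List.cons_ne_nil _ _)
    (List.nodup_singleton a) (by simpa using ha) (.singleton a)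
  have hsub : l.toFinset ⊆ S := fun b hb => hlS b (List.mem_toFinset.mp hb)
  have hlt : (S \ l.toFinset).card < S.card :=
    Finset.card_lt_card (Finset.sdiff_ssubset hsub (List.toFinset_nonempty_iff l |>.mpr hl.1))
  obtain ⟨L, hL, hdisj, hcover⟩ := (hS.sdiff hl.balanced hsub).exists_cycle_decomposition
  refine ⟨l :: L, List.forall_mem_cons.mpr ⟨hl, hL⟩, List.pairwise_cons.mpr ⟨?_, hdisj⟩, ?_⟩
  · intro m hm b hbl hbm
    have := (hcover b).mpr ⟨m, hm, hbm⟩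
    simp_all
  · intro b
    have := hcover b
    by_cases hbl : b ∈ l <;> simp_all
termination_by S.card

end Arcs

namespace Multigraph

variable {G : Multigraph}

open Function

def reversedArcs (O O' : G.PartialOrientation) : Finset (G.E × Bool) :=
  {s | O s.1 = some s.2 ∧ O' s.1 = some !s.2}

theorem IsDCycle.isCycle {O : G.PartialOrientation} {c : List (G.E × Bool)}
    (hc : G.IsDCycle O c) : Arcs.IsCycle (uncurry G.dhead) (uncurry G.dtail) c :=
  ⟨hc.1, hc.2.2.2.of_map _, hc.2.2.1⟩

theorem isDCycle_of_isCycle {O : G.PartialOrientation} {c : List (G.E × Bool)}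
    (hc : Arcs.IsCycle (uncurry G.dhead) (uncurry G.dtail) c) (hO : ∀ s ∈ c, O s.1 = some s.2) :
    G.IsDCycle O c := by
  refine ⟨hc.1, hO, hc.2.2, hc.2.1.map_on fun s hs t ht hst => Prod.ext hst ?_⟩
  exact Option.some_injective _ ((hO s hs).symm.trans (hst ▸ hO t ht))

theorem indeg_eq_card (O : G.PartialOrientation) (v : G.V) :
    G.indeg O v =
      (Finset.univ.filter fun s : G.E × Bool => O s.1 = some s.2 ∧ G.dhead s.1 s.2 = v).card := by
  rw [indeg, Nat.card_eq_fintype_card, Fintype.card_subtype]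
  symm
  refine Finset.card_bij (fun s _ => s.1) ?_ ?_ ?_
  · intro s hs
    simp only [Finset.mem_filter, Finset.mem_univ, true_and] at hs ⊢
    exact ⟨s.2, hs⟩
  · intro s hs t ht hst
    simp only [Finset.mem_filter, Finset.mem_univ, true_and] at hs ht
    refine Prod.ext hst (Option.some_injective _ ?_)
    rw [← hs.1, ← ht.1, hst]
  · intro e he
    simp only [Finset.mem_filter, Finset.mem_univ, true_and] at he
    obtain ⟨b, hb⟩ := he
    exact ⟨(e, b), by simpa using hb, rfl⟩

theorem indeg_eq_indeg_iff_balanced {O O' : G.PartialOrientation}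
    (h : ∀ e, O' e = O e ∨ O' e = (O e).map not) :
    G.indeg O' = G.indeg O ↔
      Arcs.Balanced (uncurry G.dhead) (uncurry G.dtail) (reversedArcs O O') := by
  -- edge by edge: a reversed edge counts at its head for `O` and at its tail for `O'`
  have key : ∀ v, G.indeg O' v + ((reversedArcs O O').filter (uncurry G.dhead · = v)).card =
      G.indeg O v + ((reversedArcs O O').filter (uncurry G.dtail · = v)).card := by
    intro v
    simp only [indeg_eq_card, reversedArcs, Finset.filter_filter, Finset.card_filter,
      ← Finset.sum_add_distrib, Fintype.sum_prod_type, Fintype.sum_bool]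
    refine Finset.sum_congr rfl fun e _ => ?_
    rcases h e with h | h <;> rcases hO : O e with _ | (_ | _) <;>
      simp [h, hO, dhead, dtail, add_comm]
  constructor
  · intro hdeg v
    have := key v
    rw [hdeg] at this
    omega
  · intro hbal
    funext v
    have := key v
    rw [hbal v] at this
    omega

theorem IsDCycle.reversedArcs_eq {O O' : G.PartialOrientation} {c : List (G.E × Bool)}
    (hc : G.IsDCycle O c) (hoff : ∀ e, e ∉ c.map Prod.fst → O' e = O e)
    (hon : ∀ s ∈ c, O' s.1 = some !s.2) : reversedArcs O O' = c.toFinset := by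
  ext s
  simp only [reversedArcs, Finset.mem_filter, Finset.mem_univ, true_and, List.mem_toFinset]
  refine ⟨fun ⟨hO, hO'⟩ => ?_, fun hs => ⟨hc.2.1 s hs, hon s hs⟩⟩
  have hsc : s.1 ∈ c.map Prod.fst := by
    by_contra hsc
    simp [hoff _ hsc, hO] at hO'
  obtain ⟨t, ht, hts⟩ := List.mem_map.mp hsc
  have : t.2 = s.2 := Option.some_injective _ ((hc.2.1 t ht).symm.trans (hts ▸ hO))
  rwa [← Prod.ext hts this]

theorem cycleRev.eq_or_eq_map_not {O O' : G.PartialOrientation} (h : G.cycleRev O O')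
    (e : G.E) : O' e = O e ∨ O' e = (O e).map not := by
  obtain ⟨c, hc, hoff, hon⟩ := h
  by_cases he : e ∈ c.map Prod.fst
  · obtain ⟨s, hs, rfl⟩ := List.mem_map.mp he
    simp [hon s hs, hc.2.1 s hs]
  · exact .inl (hoff e he)

theorem cycleRev.indeg_eq {O O' : G.PartialOrientation} (h : G.cycleRev O O') :
    G.indeg O' = G.indeg O := by
  refine (indeg_eq_indeg_iff_balanced h.eq_or_eq_map_not).mpr ?_
  obtain ⟨c, hc, hoff, hon⟩ := h
  rw [hc.reversedArcs_eq hoff hon]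
  exact hc.isCycle.balanced

theorem cycleRev.eq_none_iff {O O' : G.PartialOrientation} (h : G.cycleRev O O') (e : G.E) :
    O' e = none ↔ O e = none := by
  rcases h.eq_or_eq_map_not e with h | h <;> simp [h]

theorem indeg_eq_of_reflTransGen_cycleRev {O O' : G.PartialOrientation}
    (h : Relation.ReflTransGen G.cycleRev O O') : G.indeg O' = G.indeg O := by
  induction h with
  | refl => rfl
  | tail _ hstep ih => exact hstep.indeg_eq.trans ih

theorem eq_none_iff_of_reflTransGen_cycleRev {O O' : G.PartialOrientation}
    (h : Relation.ReflTransGen G.cycleRev O O') (e : G.E) : O' e = none ↔ O e = none := by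
  induction h with
  | refl => rfl
  | tail _ hstep ih => exact (hstep.eq_none_iff e).trans ih

theorem eq_or_eq_map_not_of_eq_none_iff {O O' : G.PartialOrientation}
    (hsupp : ∀ e, O e = none ↔ O' e = none) (e : G.E) : O' e = O e ∨ O' e = (O e).map not := by
  have := hsupp e
  rcases hO : O e with _ | (_ | _) <;> rcases hO' : O' e with _ | (_ | _) <;> simp_all

theorem ne_iff_exists_mem_reversedArcs {O O' : G.PartialOrientation}
    (hsupp : ∀ e, O e = none ↔ O' e = none) (e : G.E) :
    O e ≠ O' e ↔ ∃ b, (e, b) ∈ reversedArcs O O' := by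
  have := hsupp e
  simp only [reversedArcs, Finset.mem_filter, Finset.mem_univ, true_and]
  rcases hO : O e with _ | (_ | _) <;> rcases hO' : O' e with _ | (_ | _) <;> simp_all

theorem exists_isDCycle_decomposition {O O' : G.PartialOrientation}
    (hsupp : ∀ e, O e = none ↔ O' e = none) (hdeg : G.indeg O' = G.indeg O) :
    ∃ L : List (List (G.E × Bool)), (∀ c ∈ L, G.IsDCycle O c) ∧
      L.Pairwise (fun c d => ∀ e, e ∈ c.map Prod.fst → e ∉ d.map Prod.fst) ∧
      ∀ e, (O e ≠ O' e ↔ ∃ c ∈ L, e ∈ c.map Prod.fst) := by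
  obtain ⟨L, hL, hdisj, hcover⟩ :=
    ((indeg_eq_indeg_iff_balanced (eq_or_eq_map_not_of_eq_none_iff hsupp)).mp
      hdeg).exists_cycle_decomposition
  have hO : ∀ c ∈ L, ∀ s ∈ c, O s.1 = some s.2 := fun c hc s hs =>
    (Finset.mem_filter.mp ((hcover s).mpr ⟨c, hc, hs⟩)).2.1
  refine ⟨L, fun c hc => isDCycle_of_isCycle (hL c hc) (hO c hc), ?_, fun e => ?_⟩
  · refine hdisj.imp_of_mem fun {c d} hc hd hcd e hec hed => ?_
    obtain ⟨s, hs, rfl⟩ := List.mem_map.mp hec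
    obtain ⟨t, ht, hts⟩ := List.mem_map.mp hed
    have : t.2 = s.2 := Option.some_injective _ ((hO d hd t ht).symm.trans (hts ▸ hO c hc s hs))
    exact hcd hs (Prod.ext hts this ▸ ht)
  · rw [ne_iff_exists_mem_reversedArcs hsupp]
    simp only [hcover, List.mem_map]
    constructor
    · rintro ⟨b, c, hc, hs⟩
      exact ⟨c, hc, _, hs, rfl⟩
    · rintro ⟨c, hc, s, hs, rfl⟩
      exact ⟨s.2, c, hc, hs⟩

def reverseCycle (O : G.PartialOrientation) (c : List (G.E × Bool)) : G.PartialOrientation :=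
  fun e => if e ∈ c.map Prod.fst then (O e).map not else O e

theorem IsDCycle.cycleRev_reverseCycle {O : G.PartialOrientation} {c : List (G.E × Bool)}
    (hc : G.IsDCycle O c) : G.cycleRev O (reverseCycle O c) := by
  refine ⟨c, hc, fun e he => if_neg he, fun s hs => ?_⟩
  rw [reverseCycle, if_pos (List.mem_map_of_mem hs), hc.2.1 s hs]
  rfl

section Minimal

variable [LinearOrder G.E]

theorem eq_some_of_isLeast_ne {A : G.E → Bool} {O O' : G.PartialOrientation}
    (hsupp : ∀ e, O e = none ↔ O' e = none) (hdeg : G.indeg O' = G.indeg O)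
    (hmin : G.CycleMinimal A O) {e : G.E} (he : IsLeast {f | O f ≠ O' f} e) :
    O e = some (A e) := by
  obtain ⟨L, hL, -, hcover⟩ := exists_isDCycle_decomposition hsupp hdeg
  obtain ⟨c, hc, hec⟩ := (hcover e).mp he.1
  obtain ⟨s, hs, hsle, hsA⟩ := hmin c (hL c hc)
  obtain ⟨t, ht, rfl⟩ := List.mem_map.mp hec
  have hse : s.1 = t.1 :=
    le_antisymm (hsle t ht) (he.2 ((hcover s.1).mpr ⟨c, hc, List.mem_map_of_mem hs⟩))
  rw [← hse, (hL c hc).2.1 s hs, hsA]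

theorem eq_of_cycleMinimal {A : G.E → Bool} {O O' : G.PartialOrientation}
    (hsupp : ∀ e, O e = none ↔ O' e = none) (hdeg : G.indeg O' = G.indeg O)
    (hmin : G.CycleMinimal A O) (hmin' : G.CycleMinimal A O') : O = O' := by
  by_contra hne
  set D := {f | O f ≠ O' f}
  have hD : D.Nonempty := Function.ne_iff.mp hne
  have he : IsLeast D (wellFounded_lt.min D hD) :=
    ⟨wellFounded_lt.min_mem D hD, fun f hf => not_lt.mp (wellFounded_lt.not_lt_min D hf)⟩
  have he' : IsLeast {f | O' f ≠ O f} (wellFounded_lt.min D hD) := by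
    simpa only [D, ne_comm] using he
  exact he.1 ((eq_some_of_isLeast_ne hsupp hdeg hmin he).trans
    (eq_some_of_isLeast_ne (fun e => (hsupp e).symm) hdeg.symm hmin' he').symm)

def disagreement (A : G.E → Bool) (O : G.PartialOrientation) : Lex (G.E → Bool) :=
  toLex fun e => decide (O e = some !(A e))

theorem disagreement_reverseCycle_lt {A : G.E → Bool} {O : G.PartialOrientation}
    {c : List (G.E × Bool)} (hc : G.IsDCycle O c) (hnot : ¬ G.MinimalSteps A c) :
    disagreement A (reverseCycle O c) < disagreement A O := by
  obtain ⟨s, hs, hsle⟩ := c.toFinset.exists_min_image Prod.fst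
    ((List.toFinset_nonempty_iff c).mpr hc.1)
  rw [List.mem_toFinset] at hs
  have hsA : s.2 = !(A s.1) :=
    Bool.eq_not_iff.mpr fun h => hnot ⟨s, hs, fun t ht => hsle t (List.mem_toFinset.mpr ht), h⟩
  refine ⟨s.1, fun e he => ?_, ?_⟩
  · have : e ∉ c.map Prod.fst := fun hec => by
      obtain ⟨t, ht, rfl⟩ := List.mem_map.mp hec
      exact (hsle t (List.mem_toFinset.mpr ht)).not_gt he
    simp only [disagreement, Pi.toLex_apply, reverseCycle, if_neg this]
  · simp only [disagreement, Pi.toLex_apply, reverseCycle, if_pos (List.mem_map_of_mem hs),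
      hc.2.1 s hs, hsA]
    simp

theorem exists_reflTransGen_cycleRev_cycleMinimal (A : G.E → Bool) (O : G.PartialOrientation) :
    ∃ O', Relation.ReflTransGen G.cycleRev O O' ∧ G.CycleMinimal A O' := by
  induction O using (InvImage.wf (disagreement A) wellFounded_lt).induction with
  | _ O ih =>
    by_cases hmin : G.CycleMinimal A O
    · exact ⟨O, .refl, hmin⟩
    obtain ⟨c, hc, hnot⟩ : ∃ c, G.IsDCycle O c ∧ ¬ G.MinimalSteps A c := by
      simpa [CycleMinimal] using hmin
    obtain ⟨O', hO', hmin'⟩ := ih _ (disagreement_reverseCycle_lt hc hnot)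
    exact ⟨O', .head hc.cycleRev_reverseCycle hO', hmin'⟩

end Minimal

end Multigraph

/-- partial orientations related by directed cycle reversals differ on an
edge-disjoint union of directed cycles of the first; consequently every partial
orientation is equivalent via cycle reversals to a unique cycle minimal one. -/
theorem stmt8 (G : Multigraph) [LinearOrder G.E] (A : G.E → Bool) :
    (∀ O O' : G.PartialOrientation, (∀ e, O e = none ↔ O' e = none) →
      Relation.ReflTransGen G.cycleRev O O' →
      ∃ L : List (List (G.E × Bool)), (∀ c ∈ L, G.IsDCycle O c) ∧
        L.Pairwise (fun c d => ∀ e, e ∈ c.map Prod.fst → e ∉ d.map Prod.fst) ∧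
        ∀ e, (O e ≠ O' e ↔ ∃ c ∈ L, e ∈ c.map Prod.fst)) ∧
    (∀ O : G.PartialOrientation,
      ∃! O', Relation.ReflTransGen G.cycleRev O O' ∧ G.CycleMinimal A O') := by
  refine ⟨fun O O' hsupp h => G.exists_isDCycle_decomposition hsupp
    (G.indeg_eq_of_reflTransGen_cycleRev h), fun O => ?_⟩
  obtain ⟨O₁, h₁, hmin₁⟩ := G.exists_reflTransGen_cycleRev_cycleMinimal A O
  refine ⟨O₁, ⟨h₁, hmin₁⟩, fun O₂ ⟨h₂, hmin₂⟩ => ?_⟩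
  refine G.eq_of_cycleMinimal (fun e => ?_) ?_ hmin₂ hmin₁
  · rw [G.eq_none_iff_of_reflTransGen_cycleRev h₁, G.eq_none_iff_of_reflTransGen_cycleRev h₂]
  · rw [G.indeg_eq_of_reflTransGen_cycleRev h₁, G.indeg_eq_of_reflTransGen_cycleRev h₂]
end
end
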